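/- arXiv:1901.07506 — 3 statements merged into one kernel-verified Lean document; each statement's English description precedes it below -/
import Mathlib

section
/- Let k > 0 be a real number, c0 = 0.558, and L ∈ ℕ with L ≥ 1 and log k ≤ (L+1)/c0. For any a = (a_0, …, a_L) ∈ ℝ^{L+1} with a_0 = −1, the function λ ↦ g(a, λ) has strictly negative derivative at every λ ≥ 6.5·L; in particular g(a, ·) is strictly decreasing on [6.5·L, ∞). -/
open Finset

/-- `P L a x = ∑_{l=0}^L a_l x^l`. -/
noncomputable def P (L : ℕ) (a : ℕ → ℝ) (x : ℝ) : ℝ :=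
  ∑ l ∈ range (L + 1), a l * x ^ l

/-- `g(a, λ) = (1/k)·∑_{l=0}^L e^{−λ} a_l² λ^l l! + (e^{−λ} P_L(λ, a))²`. -/
noncomputable def g (k : ℝ) (L : ℕ) (a : ℕ → ℝ) (x : ℝ) : ℝ :=
  (1 / k) * (∑ l ∈ range (L + 1),
      Real.exp (-x) * (a l) ^ 2 * x ^ l * (l.factorial : ℝ))
    + (Real.exp (-x) * P L a x) ^ 2

/-- derivative of the polynomial `P`. -/
noncomputable def Pd (L : ℕ) (a : ℕ → ℝ) (x : ℝ) : ℝ :=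
  ∑ l ∈ range (L + 1), a l * ((l : ℝ) * x ^ (l - 1))

lemma hasDerivAt_P (L : ℕ) (a : ℕ → ℝ) (x : ℝ) :
    HasDerivAt (P L a) (Pd L a x) x := by
  have h : HasDerivAt (fun y : ℝ => ∑ l ∈ range (L + 1), a l * y ^ l)
      (∑ l ∈ range (L + 1), a l * ((l : ℝ) * x ^ (l - 1))) x :=
    HasDerivAt.fun_sum (fun l _ => (hasDerivAt_pow l x).const_mul (a l))
  exact h

lemma hasDerivAt_expneg (x : ℝ) :
    HasDerivAt (fun y : ℝ => Real.exp (-y)) (-Real.exp (-x)) x := by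
  simpa [Function.comp_def] using ((Real.hasDerivAt_exp (-x)).comp x ((hasDerivAt_id x).neg))

lemma hasDerivAt_g (k : ℝ) (L : ℕ) (a : ℕ → ℝ) (x : ℝ) :
    HasDerivAt (g k L a)
      ((1 / k) * (∑ l ∈ range (L + 1),
          Real.exp (-x) * ((a l) ^ 2 * (l.factorial : ℝ)) * ((l : ℝ) * x ^ (l - 1) - x ^ l))
        + 2 * (Real.exp (-x) * P L a x) *
            (Real.exp (-x) * (Pd L a x - P L a x))) x := by
  have hterm : ∀ l ∈ range (L + 1), HasDerivAt
      (fun y : ℝ => Real.exp (-y) * (a l) ^ 2 * y ^ l * (l.factorial : ℝ))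
      (((-Real.exp (-x) * (a l) ^ 2) * x ^ l
        + (Real.exp (-x) * (a l) ^ 2) * ((l : ℝ) * x ^ (l - 1))) * (l.factorial : ℝ)) x := by
    intro l _
    exact (((hasDerivAt_expneg x).mul_const ((a l) ^ 2)).mul (hasDerivAt_pow l x)).mul_const _
  have hsum := HasDerivAt.fun_sum hterm
  have hQ : HasDerivAt (fun y : ℝ => Real.exp (-y) * P L a y)
      (-Real.exp (-x) * P L a x + Real.exp (-x) * Pd L a x) x :=
    (hasDerivAt_expneg x).mul (hasDerivAt_P L a x)
  have h := (hsum.const_mul (1 / k)).add (hQ.pow 2)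
  have hfun : (fun y : ℝ => (1 / k) * (∑ l ∈ range (L + 1),
      Real.exp (-y) * (a l) ^ 2 * y ^ l * (l.factorial : ℝ))
      + (Real.exp (-y) * P L a y) ^ 2) = g k L a := rfl
  change HasDerivAt (g k L a) _ x at h
  convert h using 1
  have hs : (∑ l ∈ range (L + 1),
      Real.exp (-x) * ((a l) ^ 2 * (l.factorial : ℝ)) * ((l : ℝ) * x ^ (l - 1) - x ^ l))
      = ∑ l ∈ range (L + 1),
      ((-Real.exp (-x) * (a l) ^ 2) * x ^ l
        + (Real.exp (-x) * (a l) ^ 2) * ((l : ℝ) * x ^ (l - 1))) * (l.factorial : ℝ) :=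
    Finset.sum_congr rfl (fun l _ => by ring)
  rw [hs]
  ring

/-- numeric fact: `6.5 ≤ e^{1.9}`. -/
lemma sixhalf_le_exp : (6.5 : ℝ) ≤ Real.exp 1.9 := by
  have h := Real.sum_le_exp_of_nonneg (x := (1.9 : ℝ)) (by norm_num) 6
  refine le_trans ?_ h
  norm_num [Finset.sum_range_succ, Nat.factorial]

set_option maxHeartbeats 1000000 in
theorem stmt_1 (k : ℝ) (hk : 0 < k) (L : ℕ) (hL1 : 1 ≤ L)
    (hlogk : Real.log k ≤ ((L : ℝ) + 1) / 0.558)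
    (a : ℕ → ℝ) (ha0 : a 0 = -1) :
    (∀ x : ℝ, 6.5 * L ≤ x → deriv (g k L a) x < 0) ∧
    StrictAntiOn (g k L a) (Set.Ici (6.5 * (L : ℝ))) := by
  have hLr : (1 : ℝ) ≤ (L : ℝ) := by exact_mod_cast hL1
  have key : ∀ x : ℝ, 6.5 * (L : ℝ) ≤ x → deriv (g k L a) x < 0 := by
    intro x hx
    have hx0 : (0 : ℝ) < x := by nlinarith
    set E := Real.exp (-x) with hE
    have hE0 : 0 < E := Real.exp_pos _
    -- key per-degree inequality : l * x^(l-1) ≤ (2/13) * x^l for l ≤ L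
    have hdeg : ∀ l ∈ range (L + 1), (l : ℝ) * x ^ (l - 1) ≤ (2 / 13) * x ^ l := by
      intro l hl
      have hlL : l ≤ L := Nat.lt_succ_iff.mp (Finset.mem_range.mp hl)
      match l with
      | 0 => simp; positivity
      | Nat.succ m =>
        have hxm : (0 : ℝ) ≤ x ^ m := by positivity
        have hcast : ((m : ℝ) + 1) ≤ (L : ℝ) := by exact_mod_cast hlL
        have h1 : ((m : ℝ) + 1) ≤ (2 / 13) * x := by nlinarith
        have : ((m : ℝ) + 1) * x ^ m ≤ ((2 / 13) * x) * x ^ m :=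
          mul_le_mul_of_nonneg_right h1 hxm
        simpa [pow_succ, Nat.succ_sub_one, mul_comm, mul_assoc, mul_left_comm] using this
    set T : ℝ := ∑ l ∈ range (L + 1), (a l) ^ 2 * (l.factorial : ℝ) * x ^ l with hT
    set Es : ℝ := ∑ l ∈ range (L + 1), x ^ l / (l.factorial : ℝ) with hEs
    set M : ℝ := ∑ l ∈ range (L + 1), |a l| * x ^ l with hM
    have hT1 : (1 : ℝ) ≤ T := by
      have h0 : ∀ l ∈ range (L + 1), (0 : ℝ) ≤ (a l) ^ 2 * (l.factorial : ℝ) * x ^ l := by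
        intro l _; positivity
      have := Finset.single_le_sum h0 (Finset.mem_range.mpr (Nat.succ_pos L))
      simpa [ha0] using this
    have hEs0 : (0 : ℝ) ≤ Es := by
      apply Finset.sum_nonneg; intro l _; positivity
    have hM0 : (0 : ℝ) ≤ M := by
      apply Finset.sum_nonneg; intro l _; positivity
    -- bound for the first sum
    have hS1 : (∑ l ∈ range (L + 1),
        E * ((a l) ^ 2 * (l.factorial : ℝ)) * ((l : ℝ) * x ^ (l - 1) - x ^ l))
        ≤ -(11 / 13) * E * T := by
      have : (∑ l ∈ range (L + 1),
          E * ((a l) ^ 2 * (l.factorial : ℝ)) * ((l : ℝ) * x ^ (l - 1) - x ^ l))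
          ≤ ∑ l ∈ range (L + 1),
          E * ((a l) ^ 2 * (l.factorial : ℝ)) * (-(11 / 13) * x ^ l) := by
        apply Finset.sum_le_sum
        intro l hl
        have h1 := hdeg l hl
        have hc : (0 : ℝ) ≤ E * ((a l) ^ 2 * (l.factorial : ℝ)) := by positivity
        apply mul_le_mul_of_nonneg_left _ hc
        linarith
      refine this.trans_eq ?_
      rw [hT, Finset.mul_sum]
      apply Finset.sum_congr rfl
      intro l _; ring
    -- Cauchy-Schwarz : M^2 ≤ T * Es
    have hCS : M ^ 2 ≤ T * Es := by
      have h := Finset.sum_mul_sq_le_sq_mul_sq (range (L + 1))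
        (fun l => |a l| * Real.sqrt ((l.factorial : ℝ) * x ^ l))
        (fun l => Real.sqrt (x ^ l / (l.factorial : ℝ)))
      have hfg : ∀ l ∈ range (L + 1),
          (|a l| * Real.sqrt ((l.factorial : ℝ) * x ^ l)) *
            Real.sqrt (x ^ l / (l.factorial : ℝ)) = |a l| * x ^ l := by
        intro l _
        have hf0 : (0 : ℝ) < (l.factorial : ℝ) := by positivity
        have hx1 : (0 : ℝ) ≤ (l.factorial : ℝ) * x ^ l := by positivity
        rw [mul_assoc, ← Real.sqrt_mul hx1]
        have : (l.factorial : ℝ) * x ^ l * (x ^ l / (l.factorial : ℝ)) = x ^ l * x ^ l := by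
          field_simp
        rw [this, Real.sqrt_mul_self (by positivity)]
      have hf2 : ∀ l ∈ range (L + 1),
          (|a l| * Real.sqrt ((l.factorial : ℝ) * x ^ l)) ^ 2
            = (a l) ^ 2 * (l.factorial : ℝ) * x ^ l := by
        intro l _
        rw [mul_pow, Real.sq_sqrt (by positivity), sq_abs]
        ring
      have hg2 : ∀ l ∈ range (L + 1),
          (Real.sqrt (x ^ l / (l.factorial : ℝ))) ^ 2 = x ^ l / (l.factorial : ℝ) := by
        intro l _
        exact Real.sq_sqrt (by positivity)
      rw [Finset.sum_congr rfl hfg, Finset.sum_congr rfl hf2, Finset.sum_congr rfl hg2] at h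
      exact h
    -- |P| ≤ M and |Pd| ≤ (2/13) M
    have hPle : |P L a x| ≤ M := by
      refine (Finset.abs_sum_le_sum_abs _ _).trans ?_
      apply Finset.sum_le_sum
      intro l _
      rw [abs_mul, abs_pow, abs_of_pos hx0]
    have hPdle : |Pd L a x| ≤ (2 / 13) * M := by
      refine (Finset.abs_sum_le_sum_abs _ _).trans ?_
      rw [hM, Finset.mul_sum]
      apply Finset.sum_le_sum
      intro l hl
      have h1 := hdeg l hl
      have h2 : (0 : ℝ) ≤ (l : ℝ) * x ^ (l - 1) := by positivity
      rw [abs_mul, abs_of_nonneg h2]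
      calc |a l| * ((l : ℝ) * x ^ (l - 1)) ≤ |a l| * ((2 / 13) * x ^ l) :=
            mul_le_mul_of_nonneg_left h1 (abs_nonneg _)
        _ = 2 / 13 * (|a l| * x ^ l) := by ring
    -- second part bound
    have hPP : P L a x * Pd L a x - (P L a x) ^ 2 ≤ (2 / 13) * (T * Es) := by
      have h1 : P L a x * Pd L a x ≤ |P L a x| * |Pd L a x| := by
        calc P L a x * Pd L a x ≤ |P L a x * Pd L a x| := le_abs_self _
          _ = |P L a x| * |Pd L a x| := abs_mul _ _
      have h2 : |P L a x| * |Pd L a x| ≤ M * ((2 / 13) * M) :=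
        mul_le_mul hPle hPdle (abs_nonneg _) hM0
      nlinarith [sq_nonneg (P L a x), hCS]
    -- Es bound : Es ≤ 6.5^L * exp (x/6.5)
    have hEsb : Es ≤ (6.5 : ℝ) ^ L * Real.exp (x / 6.5) := by
      have h1 : Es ≤ ∑ l ∈ range (L + 1), (6.5 : ℝ) ^ L * ((x / 6.5) ^ l / (l.factorial : ℝ)) := by
        rw [hEs]
        apply Finset.sum_le_sum
        intro l hl
        have hlL : l ≤ L := Nat.lt_succ_iff.mp (Finset.mem_range.mp hl)
        have hkey : (6.5 : ℝ) ^ L * ((x / 6.5) ^ l / (l.factorial : ℝ))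
            = (6.5 : ℝ) ^ (L - l) * (x ^ l / (l.factorial : ℝ)) := by
          rw [div_pow]
          rw [← pow_sub_mul_pow (6.5 : ℝ) hlL]
          field_simp
        rw [hkey]
        have h65 : (1 : ℝ) ≤ (6.5 : ℝ) ^ (L - l) := one_le_pow₀ (by norm_num)
        nlinarith [pow_nonneg hx0.le l, (Nat.cast_pos (α := ℝ)).mpr l.factorial_pos,
          div_nonneg (pow_nonneg hx0.le l) (Nat.cast_nonneg l.factorial)]
      refine h1.trans ?_
      rw [← Finset.mul_sum]
      apply mul_le_mul_of_nonneg_left _ (by positivity)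
      exact Real.sum_le_exp_of_nonneg (by positivity) (L + 1)
    -- k * E * Es ≤ 1
    have hkE : k * (E * Es) ≤ 1 := by
      have hkexp : k ≤ Real.exp (((L : ℝ) + 1) / 0.558) := by
        calc k = Real.exp (Real.log k) := (Real.exp_log hk).symm
          _ ≤ _ := Real.exp_le_exp.mpr hlogk
      have h65L : ((6.5 : ℝ) ^ L) ≤ Real.exp (1.9 * L) := by
        calc ((6.5 : ℝ) ^ L) ≤ (Real.exp 1.9) ^ L :=
              pow_le_pow_left₀ (by norm_num) sixhalf_le_exp L
          _ = Real.exp ((L : ℝ) * 1.9) := (Real.exp_nat_mul _ _).symm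
          _ = Real.exp (1.9 * L) := by rw [mul_comm]
      have hEEs : E * Es ≤ Real.exp (1.9 * L + x / 6.5 - x) := by
        calc E * Es ≤ E * ((6.5 : ℝ) ^ L * Real.exp (x / 6.5)) :=
              mul_le_mul_of_nonneg_left hEsb hE0.le
          _ ≤ E * (Real.exp (1.9 * L) * Real.exp (x / 6.5)) := by
              apply mul_le_mul_of_nonneg_left _ hE0.le
              exact mul_le_mul_of_nonneg_right h65L (Real.exp_pos _).le
          _ = Real.exp (1.9 * L + x / 6.5 - x) := by
              rw [hE, ← Real.exp_add, ← Real.exp_add]; ring_nf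
      calc k * (E * Es) ≤ Real.exp (((L : ℝ) + 1) / 0.558) * Real.exp (1.9 * L + x / 6.5 - x) := by
            apply mul_le_mul hkexp hEEs (by positivity) (Real.exp_pos _).le
        _ = Real.exp (((L : ℝ) + 1) / 0.558 + (1.9 * L + x / 6.5 - x)) := (Real.exp_add _ _).symm
        _ ≤ Real.exp 0 := by
            apply Real.exp_le_exp.mpr
            have h1 : ((L : ℝ) + 1) / 0.558 = ((L:ℝ)+1) * (500/279) := by
              norm_num; ring
            have h2 : x / 6.5 = x * (2/13) := by ring
            rw [h1, h2]; nlinarith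
        _ = 1 := Real.exp_zero
    -- combine
    have hD := (hasDerivAt_g k L a x).deriv
    rw [hD, ← hE]
    have hEEs' : E * Es ≤ 1 / k := by
      rw [le_div_iff₀ hk]
      calc E * Es * k = k * (E * Es) := by ring
        _ ≤ 1 := hkE
    have hsecond : 2 * (E * P L a x) * (E * (Pd L a x - P L a x))
        ≤ (4 / 13) * (E * T) * (1 / k) := by
      have he1 : 2 * (E * P L a x) * (E * (Pd L a x - P L a x))
          = 2 * E ^ 2 * (P L a x * Pd L a x - (P L a x) ^ 2) := by ring
      rw [he1]
      calc 2 * E ^ 2 * (P L a x * Pd L a x - (P L a x) ^ 2)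
          ≤ 2 * E ^ 2 * ((2 / 13) * (T * Es)) :=
            mul_le_mul_of_nonneg_left hPP (by positivity)
        _ = (4 / 13) * (E * T) * (E * Es) := by ring
        _ ≤ (4 / 13) * (E * T) * (1 / k) := by
            apply mul_le_mul_of_nonneg_left hEEs'
            have : (0:ℝ) < T := lt_of_lt_of_le one_pos hT1
            positivity
    have hfirst : (1 / k) * (∑ l ∈ range (L + 1),
        E * ((a l) ^ 2 * (l.factorial : ℝ)) * ((l : ℝ) * x ^ (l - 1) - x ^ l))
        ≤ (1 / k) * (-(11 / 13) * E * T) :=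
      mul_le_mul_of_nonneg_left hS1 (by positivity)
    have hTpos : (0 : ℝ) < T := lt_of_lt_of_le one_pos hT1
    have hfin : (1 / k) * (-(11 / 13) * E * T) + (4 / 13) * (E * T) * (1 / k) < 0 := by
      have h1 : (1 / k) * (-(11 / 13) * E * T) + (4 / 13) * (E * T) * (1 / k)
          = -((7 / 13) * (E * T) / k) := by ring
      rw [h1]
      exact neg_neg_iff_pos.mpr (by positivity)
    linarith
  refine ⟨key, ?_⟩
  have hdiff : ∀ y : ℝ, DifferentiableAt ℝ (g k L a) y :=
    fun y => (hasDerivAt_g k L a y).differentiableAt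
  apply strictAntiOn_of_deriv_neg (convex_Ici _)
    ((Differentiable.continuous hdiff).continuousOn)
  intro y hy
  rw [interior_Ici] at hy
  exact key y (le_of_lt hy)
end

section
/- Let L ∈ ℕ and a = (a_0, …, a_L) ∈ ℝ^{L+1} with a_0 = −1, and let n > 0 and k > 0 be real numbers. Let I be a finite index set, let λ : I → ℝ satisfy, for each i, either λ_i = 0 or λ_i ∈ [n/k, n], and suppose S = #{i ∈ I : λ_i > 0} ≤ k. Let (N_i)_{i ∈ I} be independent random variables where N_i is Poisson with mean λ_i when λ_i > 0 and N_i = 0 almost surely when λ_i = 0, and let Ŝ = Σ_{i ∈ I} g_L(N_i). Then E[((Ŝ − S)/k)²] ≤ sup_{λ ∈ [n/k, n]} g(a, λ). -/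
open Finset MeasureTheory ProbabilityTheory

/-- The estimator function `g_L`: `g_L(j) = a_j·j! + 1` for `j ≤ L`, and `g_L(j) = 1`
for `j > L`. -/
noncomputable def gL (L : ℕ) (a : ℕ → ℝ) (j : ℕ) : ℝ :=
  if j ≤ L then a j * (j.factorial : ℝ) + 1 else 1

/-! Off the support `T = {i | λ_i > 0}` we have `N_i = 0` a.s. and `g_L(0) = 0`, so `Ŝ - S`
is the sum over `T` of the independent variables `Y_i = g_L(N_i) - 1`, whose Poisson moments
are `E Y_i = e^{-λ_i} P_L(λ_i, a)` and `E Y_i² = ∑_l e^{-λ_i} a_l² λ_i^l l!`. Independence gives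
`E (∑ Y_i)² ≤ ∑ E Y_i² + (∑ E Y_i)²`, and Cauchy–Schwarz with `#T ≤ k` bounds the last term
by `k ∑ (E Y_i)²`; hence `E ((Ŝ - S)/k)² ≤ (1/k) ∑_{i ∈ T} g(a, λ_i) ≤ sup g`. -/

open scoped NNReal

theorem integral_sq_sum_le_of_pairwise_indepFun {Ω ι : Type*} [MeasurableSpace Ω]
    {μ : Measure Ω} [IsProbabilityMeasure μ] {X : ι → Ω → ℝ} {s : Finset ι}
    (hX : ∀ i ∈ s, MemLp (X i) 2 μ)
    (hindep : Set.Pairwise ↑s fun i j => X i ⟂ᵢ[μ] X j) :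
    ∫ ω, (∑ i ∈ s, X i ω) ^ 2 ∂μ ≤
      ∑ i ∈ s, ∫ ω, X i ω ^ 2 ∂μ + #s * ∑ i ∈ s, (∫ ω, X i ω ∂μ) ^ 2 := by
  have hmean : ∫ ω, ∑ i ∈ s, X i ω ∂μ = ∑ i ∈ s, ∫ ω, X i ω ∂μ :=
    integral_finsetSum s fun i hi => (hX i hi).integrable one_le_two
  have hvar : ∫ ω, (∑ i ∈ s, X i ω) ^ 2 ∂μ =
      ∑ i ∈ s, variance (X i) μ + (∑ i ∈ s, ∫ ω, X i ω ∂μ) ^ 2 := by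
    rw [← IndepFun.variance_sum hX hindep, variance_eq_sub (memLp_finsetSum' s hX)]
    simp only [Pi.pow_apply, Finset.sum_apply, hmean]
    ring
  rw [hvar]
  gcongr with i hi
  · exact variance_le_expectation_sq (hX i hi).aestronglyMeasurable
  · exact sq_sum_le_card_mul_sum_sq

theorem sum_div_le_sSup_image {ι α : Type*} {s : Finset ι} {A : Set α} {f : α → ℝ}
    {x : ι → α} {k : ℝ} (hk : 0 < k) (hs : (#s : ℝ) ≤ k) (hbdd : BddAbove (f '' A))
    (hf : ∀ y ∈ A, 0 ≤ f y) (hx : ∀ i ∈ s, x i ∈ A) :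
    (∑ i ∈ s, f (x i)) / k ≤ sSup (f '' A) := by
  have hsup_nonneg : 0 ≤ sSup (f '' A) := Real.sSup_nonneg (by simpa using hf)
  rw [div_le_iff₀ hk]
  calc ∑ i ∈ s, f (x i) ≤ #s * sSup (f '' A) := by
        simpa using Finset.sum_le_card_nsmul s _ _ fun i hi =>
          le_csSup hbdd (Set.mem_image_of_mem f (hx i hi))
    _ ≤ sSup (f '' A) * k := by rw [mul_comm]; gcongr

theorem integral_poissonMeasure_eq_sum (r : ℝ≥0) {L : ℕ} {F : ℕ → ℝ}
    (hF : ∀ j, L < j → F j = 0) :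
    ∫ j, F j ∂poissonMeasure r =
      ∑ j ∈ range (L + 1), Real.exp (-r) * r ^ j / j.factorial * F j :=
  (integral_poissonMeasure r F).trans
    (tsum_eq_sum fun j hj => by simp [hF j (by simpa using hj)])

section Estimator

variable {L : ℕ} {a : ℕ → ℝ}

theorem gL_sub_one_of_le {j : ℕ} (hj : j ≤ L) : gL L a j - 1 = a j * j.factorial := by
  simp [gL, hj]

theorem gL_sub_one_of_lt {j : ℕ} (hj : L < j) : gL L a j - 1 = 0 := by
  simp [gL, hj.not_ge]

theorem abs_gL_sub_one_le (j : ℕ) :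
    |gL L a j - 1| ≤ ∑ l ∈ range (L + 1), |a l * l.factorial| := by
  rcases le_or_gt j L with hj | hj
  · rw [gL_sub_one_of_le hj]
    exact single_le_sum (f := fun l => |a l * l.factorial|) (fun _ _ => abs_nonneg _)
      (mem_range.2 (Nat.lt_succ_of_le hj))
  · rw [gL_sub_one_of_lt hj, abs_zero]
    exact sum_nonneg fun _ _ => abs_nonneg _

theorem integral_gL_sub_one_poissonMeasure (r : ℝ≥0) :
    ∫ j, (gL L a j - 1) ∂poissonMeasure r = Real.exp (-r) * P L a r := by
  rw [integral_poissonMeasure_eq_sum r fun j => gL_sub_one_of_lt, P, mul_sum]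
  refine sum_congr rfl fun j hj => ?_
  rw [gL_sub_one_of_le (Nat.lt_succ_iff.1 (mem_range.1 hj))]
  field_simp

theorem integral_sq_gL_sub_one_poissonMeasure (r : ℝ≥0) :
    ∫ j, (gL L a j - 1) ^ 2 ∂poissonMeasure r =
      ∑ l ∈ range (L + 1), Real.exp (-r) * a l ^ 2 * r ^ l * l.factorial := by
  rw [integral_poissonMeasure_eq_sum r fun j hj => by
    rw [gL_sub_one_of_lt hj, zero_pow two_ne_zero]]
  refine sum_congr rfl fun j hj => ?_
  rw [gL_sub_one_of_le (Nat.lt_succ_iff.1 (mem_range.1 hj))]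
  field_simp

theorem g_eq_poissonMeasure_moments (k : ℝ) (r : ℝ≥0) :
    g k L a r = (1 / k) * ∫ j, (gL L a j - 1) ^ 2 ∂poissonMeasure r
      + (∫ j, (gL L a j - 1) ∂poissonMeasure r) ^ 2 := by
  rw [integral_sq_gL_sub_one_poissonMeasure, integral_gL_sub_one_poissonMeasure, g]

theorem sum_gL_sub_card_eq {I : Type*} [Fintype I] (ha0 : a 0 = -1) {T : Finset I} {m : I → ℕ}
    (hm : ∀ i ∉ T, m i = 0) :
    ∑ i, gL L a (m i) - #T = ∑ i ∈ T, (gL L a (m i) - 1) := by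
  have hgL0 : gL L a 0 = 0 := by simp [gL, ha0]
  rw [sum_sub_distrib, ← sum_subset (subset_univ T) fun i _ hi => by rw [hm i hi, hgL0]]
  simp

end Estimator

theorem continuous_g (k : ℝ) (L : ℕ) (a : ℕ → ℝ) : Continuous (g k L a) := by
  unfold g P
  fun_prop

theorem g_nonneg {k : ℝ} (hk : 0 < k) (L : ℕ) (a : ℕ → ℝ) {x : ℝ} (hx : 0 ≤ x) :
    0 ≤ g k L a x := by
  unfold g
  refine add_nonneg (mul_nonneg (by positivity) (sum_nonneg fun l _ => ?_)) (sq_nonneg _)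
  have := pow_nonneg hx l
  positivity

open Classical in
theorem stmt_16 {Ω : Type*} [MeasurableSpace Ω] (μ : Measure Ω) [IsProbabilityMeasure μ]
    {I : Type*} [Fintype I] (L : ℕ) (a : ℕ → ℝ) (ha0 : a 0 = -1)
    (n k : ℝ) (hn : 0 < n) (hk : 0 < k)
    (lam : I → ℝ) (hlam : ∀ i, lam i = 0 ∨ lam i ∈ Set.Icc (n / k) n)
    (hS : ((Finset.univ.filter fun i : I => 0 < lam i).card : ℝ) ≤ k)
    (N : I → Ω → ℕ) (hmeas : ∀ i, Measurable (N i))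
    (hindep : iIndepFun N μ)
    (hpois : ∀ i, 0 < lam i → μ.map (N i) = poissonMeasure (lam i).toNNReal)
    (hzero : ∀ i, lam i = 0 → ∀ᵐ ω ∂μ, N i ω = 0) :
    (∫ ω, (((∑ i : I, gL L a (N i ω)) -
        ((Finset.univ.filter fun i : I => 0 < lam i).card : ℝ)) / k) ^ 2 ∂μ)
      ≤ sSup (g k L a '' Set.Icc (n / k) n) := by
  set T := Finset.univ.filter fun i : I => 0 < lam i
  set Y : I → Ω → ℝ := fun i ω => gL L a (N i ω) - 1
  have hlamT : ∀ i ∈ T, lam i ∈ Set.Icc (n / k) n := fun i hi =>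
    (hlam i).resolve_left (mem_filter.1 hi).2.ne'
  have hlam_off : ∀ i ∉ T, lam i = 0 := fun i hi => (hlam i).resolve_right fun h =>
    hi (mem_filter.2 ⟨mem_univ i, (div_pos hn hk).trans_le h.1⟩)
  have hoff : ∀ᵐ ω ∂μ, ∀ i ∉ T, N i ω = 0 := by
    refine ae_all_iff.2 fun i => ?_
    by_cases hi : i ∈ T
    · exact .of_forall fun _ h => (h hi).elim
    · exact (hzero i (hlam_off i hi)).mono fun _ h _ => h
  have hlaw : ∀ i ∈ T, ∀ F : ℕ → ℝ,
      ∫ ω, F (N i ω) ∂μ = ∫ j, F j ∂poissonMeasure (lam i).toNNReal := fun i hi F => by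
    rw [← hpois i (mem_filter.1 hi).2, integral_map (hmeas i).aemeasurable
      Measurable.of_discrete.aestronglyMeasurable]
  have hf : Measurable fun j : ℕ => gL L a j - 1 := .of_discrete
  have hY : ∀ i, MemLp (Y i) 2 μ := fun i =>
    MemLp.of_bound (hf.comp (hmeas i)).aestronglyMeasurable _
      (ae_of_all _ fun ω => abs_gL_sub_one_le (N i ω))
  have hYindep : Set.Pairwise ↑T fun i j => Y i ⟂ᵢ[μ] Y j := fun i _ j _ hij =>
    (hindep.indepFun hij).comp hf hf
  have hg : ∀ i ∈ T, g k L a (lam i) =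
      (1 / k) * ∫ ω, Y i ω ^ 2 ∂μ + (∫ ω, Y i ω ∂μ) ^ 2 := fun i hi => by
    rw [hlaw i hi fun j => (gL L a j - 1) ^ 2, hlaw i hi fun j => gL L a j - 1,
      ← g_eq_poissonMeasure_moments, Real.coe_toNNReal _ (mem_filter.1 hi).2.le]
  calc ∫ ω, ((∑ i, gL L a (N i ω) - #T) / k) ^ 2 ∂μ
      = (∫ ω, (∑ i ∈ T, Y i ω) ^ 2 ∂μ) / k ^ 2 := by
        rw [← integral_div]
        refine integral_congr_ae (hoff.mono fun ω hω => ?_)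
        simp only [sum_gL_sub_card_eq ha0 hω, div_pow, Y]
    _ ≤ (∑ i ∈ T, ∫ ω, Y i ω ^ 2 ∂μ + k * ∑ i ∈ T, (∫ ω, Y i ω ∂μ) ^ 2) /
          k ^ 2 := by
        gcongr
        exact (integral_sq_sum_le_of_pairwise_indepFun (fun i _ => hY i) hYindep).trans
          (by gcongr)
    _ = (∑ i ∈ T, g k L a (lam i)) / k := by
        rw [sum_congr rfl hg, sum_add_distrib, ← mul_sum]
        field_simp
    _ ≤ sSup (g k L a '' Set.Icc (n / k) n) :=
        sum_div_le_sSup_image hk hS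
          ((isCompact_Icc.image (continuous_g k L a)).bddAbove)
          (fun x hx => g_nonneg hk L a ((div_pos hn hk).le.trans hx.1)) hlamT
end

section
/- Let L ∈ ℕ and a = (a_0, …, a_L) ∈ ℝ^{L+1} with a_0 = −1, and let n > 0 and k > 0 be real numbers. Let I be a finite index set, let λ : I → ℝ satisfy, for each i, either λ_i = 0 or λ_i ∈ [n/k, n], and suppose S = #{i ∈ I : λ_i > 0} ≤ k. Let (N_i)_{i ∈ I} be independent random variables where N_i is Poisson with mean λ_i when λ_i > 0 and N_i = 0 almost surely when λ_i = 0, and let Ŝ = Σ_{i ∈ I} g_L(N_i). Then (1/k)·|E[Ŝ] − S| ≤ sup_{λ ∈ [n/k, n]} |e^{−λ} P_L(λ, a)| ≤ e^{−n/k}·sup_{λ ∈ [n/k, n]} |P_L(λ, a)|. -/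
open Finset MeasureTheory ProbabilityTheory

/-! Under a Poisson(λ) law, `g_L - 1` is supported on `j ≤ L` and has mean
`∑_j e^{-λ} λ^j/j! · a_j j! = e^{-λ} P_L(λ, a)`, so each present coordinate contributes
`1 + e^{-λ_i} P_L(λ_i, a)` to `E[Ŝ]`, while `a_0 = -1` makes `g_L(0) = 0` on the absent ones.
Hence `E[Ŝ] - S` is a sum of at most `k` values of `e^{-λ} P_L(λ, a)` at points of `[n/k, n]`. -/

theorem continuous_P (L : ℕ) (a : ℕ → ℝ) : Continuous (P L a) := by
  unfold P
  fun_prop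

theorem integrable_poissonMeasure_of_eq_zero_of_lt {f : ℕ → ℝ} {r : NNReal} (L : ℕ)
    (hf : ∀ j, L < j → f j = 0) : Integrable f (poissonMeasure r) :=
  integrable_poissonMeasure_iff.2 <| summable_of_ne_finset_zero (s := range (L + 1)) fun j hj => by
    simp [hf j (by simpa [Nat.lt_succ_iff] using hj)]

section Estimator

variable (L : ℕ) (a : ℕ → ℝ)

theorem gL_eq_one_add (j : ℕ) :
    gL L a j = 1 + if j ≤ L then a j * (j.factorial : ℝ) else 0 := by
  unfold gL
  split_ifs <;> ring

theorem gL_zero (ha0 : a 0 = -1) : gL L a 0 = 0 := by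
  simp [gL, ha0]

theorem integrable_gL_poissonMeasure (r : NNReal) : Integrable (gL L a) (poissonMeasure r) := by
  rw [show gL L a = fun j => 1 + _ from funext (gL_eq_one_add L a)]
  exact (integrable_const 1).add (integrable_poissonMeasure_of_eq_zero_of_lt L fun j hj => by
    simp [hj.not_ge])

theorem integral_gL_poissonMeasure (r : NNReal) :
    ∫ j, gL L a j ∂(poissonMeasure r) = 1 + Real.exp (-(r : ℝ)) * P L a r := by
  have hc : ∫ j, (if j ≤ L then a j * (j.factorial : ℝ) else 0) ∂(poissonMeasure r)
      = Real.exp (-(r : ℝ)) * P L a r := by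
    rw [integral_poissonMeasure, tsum_eq_sum (s := range (L + 1)), P, mul_sum]
    · refine sum_congr rfl fun j hj => ?_
      have hjL : j ≤ L := Nat.lt_succ_iff.1 (mem_range.1 hj)
      have hfac : (j.factorial : ℝ) ≠ 0 := by positivity
      rw [if_pos hjL, smul_eq_mul]
      field_simp
    · intro j hj
      simp [show ¬ j ≤ L by simpa [Nat.lt_succ_iff] using hj]
  simp_rw [gL_eq_one_add]
  rw [integral_add (integrable_const 1)
    (integrable_poissonMeasure_of_eq_zero_of_lt L fun j hj => by simp [hj.not_ge]),
    integral_const, hc]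
  simp

variable {Ω : Type*} [MeasurableSpace Ω] {μ : Measure Ω} {X : Ω → ℕ} {r : NNReal}

theorem integrable_gL_comp_of_map_eq_poissonMeasure (hX : Measurable X)
    (hlaw : μ.map X = poissonMeasure r) : Integrable (fun ω => gL L a (X ω)) μ :=
  (integrable_map_measure (g := gL L a) .of_discrete hX.aemeasurable).1
    (hlaw ▸ integrable_gL_poissonMeasure L a r)

theorem integral_gL_comp_of_map_eq_poissonMeasure (hX : Measurable X)
    (hlaw : μ.map X = poissonMeasure r) :
    ∫ ω, gL L a (X ω) ∂μ = 1 + Real.exp (-(r : ℝ)) * P L a r := by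
  rw [← integral_gL_poissonMeasure, ← hlaw,
    integral_map hX.aemeasurable .of_discrete]

theorem gL_comp_ae_eq_zero (ha0 : a 0 = -1) (hX : ∀ᵐ ω ∂μ, X ω = 0) :
    (fun ω => gL L a (X ω)) =ᵐ[μ] 0 := by
  filter_upwards [hX] with ω hω
  simp [hω, gL_zero L a ha0]

theorem integral_sum_gL_sub_card {I : Type*} [Fintype I] (ha0 : a 0 = -1) {lam : I → ℝ}
    [DecidablePred fun i => 0 < lam i] (hlam : ∀ i, 0 ≤ lam i) {N : I → Ω → ℕ}
    (hmeas : ∀ i, Measurable (N i))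
    (hpois : ∀ i, 0 < lam i → μ.map (N i) = poissonMeasure (lam i).toNNReal)
    (hzero : ∀ i, lam i = 0 → ∀ᵐ ω ∂μ, N i ω = 0) :
    (∫ ω, (∑ i, gL L a (N i ω)) ∂μ) - #{i | 0 < lam i}
      = ∑ i with 0 < lam i, Real.exp (-lam i) * P L a (lam i) := by
  have hzero_ae : ∀ i, ¬ 0 < lam i → (fun ω => gL L a (N i ω)) =ᵐ[μ] 0 := fun i hi =>
    gL_comp_ae_eq_zero L a ha0 (hzero i ((hlam i).eq_of_not_lt hi).symm)
  have hint : ∀ i ∈ univ, Integrable (fun ω => gL L a (N i ω)) μ := fun i _ => by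
    by_cases hli : 0 < lam i
    · exact integrable_gL_comp_of_map_eq_poissonMeasure L a (hmeas i) (hpois i hli)
    · exact integrable_zero _ _ μ |>.congr (hzero_ae i hli).symm
  have hpos_integral : ∀ i ∈ univ.filter (0 < lam ·),
      ∫ ω, gL L a (N i ω) ∂μ = 1 + Real.exp (-lam i) * P L a (lam i) := fun i hi => by
    have hli := (mem_filter.1 hi).2
    rw [integral_gL_comp_of_map_eq_poissonMeasure L a (hmeas i) (hpois i hli),
      Real.coe_toNNReal _ hli.le]
  rw [integral_finsetSum _ hint, ← sum_subset (filter_subset (0 < lam ·) univ),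
    sum_congr rfl hpos_integral, sum_add_distrib, sum_const, nsmul_one, add_sub_cancel_left]
  exact fun i _ hi =>
    integral_eq_zero_of_ae (hzero_ae i fun h => hi (mem_filter.2 ⟨mem_univ i, h⟩))

end Estimator

theorem abs_sum_le_card_mul_sSup {ι α : Type*} (s : Finset ι) {f : α → ℝ} {S : Set α}
    (hf : BddAbove ((fun x => |f x|) '' S)) {x : ι → α} (hx : ∀ i ∈ s, x i ∈ S) :
    |∑ i ∈ s, f (x i)| ≤ s.card * sSup ((fun x => |f x|) '' S) :=
  calc |∑ i ∈ s, f (x i)| ≤ ∑ i ∈ s, |f (x i)| := abs_sum_le_sum_abs _ _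
    _ ≤ ∑ _i ∈ s, sSup ((fun x => |f x|) '' S) :=
        sum_le_sum fun i hi => le_csSup hf ⟨x i, hx i hi, rfl⟩
    _ = s.card * sSup ((fun x => |f x|) '' S) := by rw [sum_const, nsmul_eq_mul]

theorem sSup_abs_exp_neg_mul_le {f : ℝ → ℝ} {S : Set ℝ} {c : ℝ}
    (hf : BddAbove ((fun x => |f x|) '' S)) (hS : ∀ x ∈ S, c ≤ x) :
    sSup ((fun x => |Real.exp (-x) * f x|) '' S)
      ≤ Real.exp (-c) * sSup ((fun x => |f x|) '' S) := by
  have hM : 0 ≤ sSup ((fun x => |f x|) '' S) :=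
    Real.sSup_nonneg (by rintro _ ⟨x, -, rfl⟩; exact abs_nonneg _)
  refine Real.sSup_le ?_ (mul_nonneg (Real.exp_pos _).le hM)
  rintro _ ⟨x, hx, rfl⟩
  dsimp only
  rw [abs_mul, abs_of_pos (Real.exp_pos _)]
  exact mul_le_mul (Real.exp_le_exp.2 (neg_le_neg (hS x hx))) (le_csSup hf ⟨x, hx, rfl⟩)
    (abs_nonneg _) (Real.exp_pos _).le

open Classical in
theorem stmt_17_general {Ω : Type*} [MeasurableSpace Ω] (μ : Measure Ω)
    {I : Type*} [Fintype I] (L : ℕ) (a : ℕ → ℝ) (ha0 : a 0 = -1)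
    (n k : ℝ) (hn : 0 < n) (hk : 0 < k)
    (lam : I → ℝ) (hlam : ∀ i, lam i = 0 ∨ lam i ∈ Set.Icc (n / k) n)
    (hS : ((Finset.univ.filter fun i : I => 0 < lam i).card : ℝ) ≤ k)
    (N : I → Ω → ℕ) (hmeas : ∀ i, Measurable (N i))
    (hpois : ∀ i, 0 < lam i → μ.map (N i) = poissonMeasure (lam i).toNNReal)
    (hzero : ∀ i, lam i = 0 → ∀ᵐ ω ∂μ, N i ω = 0) :
    (1 / k) * |(∫ ω, (∑ i : I, gL L a (N i ω)) ∂μ) -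
        ((Finset.univ.filter fun i : I => 0 < lam i).card : ℝ)|
      ≤ sSup ((fun x : ℝ => |Real.exp (-x) * P L a x|) '' Set.Icc (n / k) n) ∧
    sSup ((fun x : ℝ => |Real.exp (-x) * P L a x|) '' Set.Icc (n / k) n)
      ≤ Real.exp (-(n / k)) *
          sSup ((fun x : ℝ => |P L a x|) '' Set.Icc (n / k) n) := by
  have hcases : ∀ i, lam i = 0 ∨ 0 < lam i ∧ lam i ∈ Set.Icc (n / k) n := fun i =>
    (hlam i).imp_right fun h => ⟨(div_pos hn hk).trans_le h.1, h⟩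
  have hbias := integral_sum_gL_sub_card L a ha0
    (fun i => (hcases i).elim ge_of_eq fun h => h.1.le) hmeas hpois hzero
  have hbdd : ∀ f : ℝ → ℝ, Continuous f →
      BddAbove ((fun x => |f x|) '' Set.Icc (n / k) n) := fun f hf => (isCompact_Icc.image hf.abs).bddAbove
  have hweighted := hbdd _ ((Real.continuous_exp.comp continuous_neg).mul (continuous_P L a))
  refine ⟨?_, sSup_abs_exp_neg_mul_le (hbdd _ (continuous_P L a)) fun x hx => hx.1⟩
  rw [one_div, inv_mul_le_iff₀ hk, hbias]
  refine (abs_sum_le_card_mul_sSup _ hweighted fun i hi => ?_).trans ?_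
  · exact ((hcases i).resolve_left (mem_filter.1 hi).2.ne').2
  · exact mul_le_mul_of_nonneg_right hS
      (Real.sSup_nonneg (by rintro _ ⟨x, -, rfl⟩; positivity))

open Classical in
theorem stmt_17 {Ω : Type*} [MeasurableSpace Ω] (μ : Measure Ω) [IsProbabilityMeasure μ]
    {I : Type*} [Fintype I] (L : ℕ) (a : ℕ → ℝ) (ha0 : a 0 = -1)
    (n k : ℝ) (hn : 0 < n) (hk : 0 < k)
    (lam : I → ℝ) (hlam : ∀ i, lam i = 0 ∨ lam i ∈ Set.Icc (n / k) n)
    (hS : ((Finset.univ.filter fun i : I => 0 < lam i).card : ℝ) ≤ k)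
    (N : I → Ω → ℕ) (hmeas : ∀ i, Measurable (N i))
    (hindep : iIndepFun N μ)
    (hpois : ∀ i, 0 < lam i → μ.map (N i) = poissonMeasure (lam i).toNNReal)
    (hzero : ∀ i, lam i = 0 → ∀ᵐ ω ∂μ, N i ω = 0) :
    (1 / k) * |(∫ ω, (∑ i : I, gL L a (N i ω)) ∂μ) -
        ((Finset.univ.filter fun i : I => 0 < lam i).card : ℝ)|
      ≤ sSup ((fun x : ℝ => |Real.exp (-x) * P L a x|) '' Set.Icc (n / k) n) ∧
    sSup ((fun x : ℝ => |Real.exp (-x) * P L a x|) '' Set.Icc (n / k) n)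
      ≤ Real.exp (-(n / k)) *
          sSup ((fun x : ℝ => |P L a x|) '' Set.Icc (n / k) n) :=
  stmt_17_general μ L a ha0 n k hn hk lam hlam hS N hmeas hpois hzero
end
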